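/- arXiv:2106.11110 — 2 statements merged into one kernel-verified Lean document; each statement's English description precedes it below -/
import Mathlib

section
/- Let λ>0 and let f:ℝ₊×ℝ₊*×ℝ→ℝ₊ be bounded measurable with f ≥ σ > 0 for a ≥ Δ. For every ε>0 define θ := 1 − (1−e^{-λε}) e^{−‖f‖_∞ ε} ∈ (0,1). Then for all m>0 and x∈ℝ: ∫₀^∞ e^{-λa} f(a, e^{-λa}m, x) exp(−∫₀^a f(s, e^{-λs}m, x) ds) da ≤ θ < 1. -/
/-!
For a hazard rate `g ≥ 0` the survival function `S a = exp (-∫₀^a g)` is absolutely continuous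
with `S' = -g S` almost everywhere, so `∫_c^d g S = S c - S d`. Splitting the discounted integral
at `ε`, the part over `(0, ε]` is at most `∫₀^ε g S = 1 - S ε` because the discount is `≤ 1`,
and the tail is at most `e^{-λε} ∫_ε^∞ g S ≤ e^{-λε} S ε`. This gives the bound
`1 - (1 - e^{-λε}) S ε`, and `g ≤ ‖f‖_∞` gives `S ε ≥ e^{-‖f‖_∞ ε}`. The theorem is the case
`g s = f (s, e^{-λs} m, x)`.
-/

open MeasureTheory Set Filter

theorem AbsolutelyContinuousOnInterval.comp_lipschitzOnWith {X F : Type*} [PseudoMetricSpace X]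
    [SeminormedAddCommGroup F] {f : ℝ → F} {φ : F → X} {K : NNReal} {s : Set F} {a b : ℝ}
    (hf : AbsolutelyContinuousOnInterval f a b) (hφ : LipschitzOnWith K φ s)
    (hfs : MapsTo f (uIcc a b) s) :
    AbsolutelyContinuousOnInterval (φ ∘ f) a b := by
  unfold AbsolutelyContinuousOnInterval at hf ⊢
  refine squeeze_zero' (Eventually.of_forall fun _ ↦ Finset.sum_nonneg fun _ _ ↦ dist_nonneg)
    ?_ (by simpa using hf.const_mul (K : ℝ))
  filter_upwards [mem_inf_of_right (mem_principal_self _)] with E hE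
  rw [Finset.mul_sum]
  exact Finset.sum_le_sum fun i hi ↦
    hφ.dist_le_mul _ (hfs (hE.1 i hi).1) _ (hfs (hE.1 i hi).2)

theorem AbsolutelyContinuousOnInterval.comp_locallyLipschitz {X F : Type*} [PseudoMetricSpace X]
    [SeminormedAddCommGroup F] {f : ℝ → F} {φ : F → X} {a b : ℝ}
    (hf : AbsolutelyContinuousOnInterval f a b) (hφ : LocallyLipschitz φ) :
    AbsolutelyContinuousOnInterval (φ ∘ f) a b := by
  obtain ⟨K, hK⟩ := LocallyLipschitzOn.exists_lipschitzOnWith_of_compact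
    (isCompact_uIcc.image_of_continuousOn hf.continuousOn) hφ.locallyLipschitzOn
  exact hf.comp_lipschitzOnWith hK (mapsTo_image f _)

noncomputable def survival (g : ℝ → ℝ) (a : ℝ) : ℝ := Real.exp (-∫ s in (0:ℝ)..a, g s)

theorem survival_pos (g : ℝ → ℝ) (a : ℝ) : 0 < survival g a := Real.exp_pos _

theorem survival_zero (g : ℝ → ℝ) : survival g 0 = 1 := by simp [survival]

theorem absolutelyContinuousOnInterval_survival {g : ℝ → ℝ} (hg : LocallyIntegrable g volume)
    (a b : ℝ) : AbsolutelyContinuousOnInterval (survival g) a b := by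
  set p := min 0 (min a b)
  set q := max 0 (max a b)
  have hpq : p ≤ q := by grind
  have hprim : AbsolutelyContinuousOnInterval (fun x ↦ ∫ t in (0:ℝ)..x, g t) p q :=
    ((hg.integrableOn_isCompact isCompact_uIcc).intervalIntegrable)
      |>.absolutelyContinuousOnInterval_intervalIntegral (by rw [uIcc_of_le hpq]; grind)
  refine (hprim.mono ?_).comp_locallyLipschitz (φ := fun y ↦ Real.exp (-y))
    (Real.contDiff_exp.comp contDiff_neg).locallyLipschitz
  apply uIcc_subset_uIcc <;> rw [uIcc_of_le hpq] <;> grind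

theorem integral_mul_survival {g : ℝ → ℝ} (hg : LocallyIntegrable g volume) (a b : ℝ) :
    ∫ s in a..b, g s * survival g s = survival g a - survival g b := by
  have hderiv : ∀ᵐ x, HasDerivAt (survival g) (-(g x * survival g x)) x := by
    filter_upwards [LocallyIntegrable.ae_hasDerivAt_integral hg] with x hx
    have := (hx 0).fun_neg.exp
    rwa [mul_neg, mul_comm] at this
  rw [← neg_sub, ← (absolutelyContinuousOnInterval_survival hg a b).integral_deriv_eq_sub,
    ← intervalIntegral.integral_neg]
  refine intervalIntegral.integral_congr_ae (hderiv.mono fun x hx _ ↦ ?_)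
  rw [hx.deriv, neg_neg]

theorem exp_neg_mul_le_survival {g : ℝ → ℝ} {M ε : ℝ} (hg : LocallyIntegrable g volume)
    (hgM : ∀ s, g s ≤ M) (hε : 0 ≤ ε) : Real.exp (-M * ε) ≤ survival g ε := by
  have hprim : ∫ s in (0:ℝ)..ε, g s ≤ ε * M := by
    simpa using intervalIntegral.integral_mono_on hε
      (hg.integrableOn_isCompact isCompact_uIcc).intervalIntegrable intervalIntegrable_const
      fun s _ ↦ hgM s
  exact Real.exp_le_exp.2 (by linarith)

theorem intervalIntegrable_mul_survival {g : ℝ → ℝ} (hg : LocallyIntegrable g volume)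
    (c d : ℝ) : IntervalIntegrable (fun a ↦ g a * survival g a) volume c d :=
  (hg.integrableOn_isCompact isCompact_uIcc).intervalIntegrable.mul_continuousOn
    (absolutelyContinuousOnInterval_survival hg c d).continuousOn

theorem intervalIntegrable_exp_mul_mul_survival {g : ℝ → ℝ} (lam : ℝ)
    (hg : LocallyIntegrable g volume) (c d : ℝ) :
    IntervalIntegrable (fun a ↦ Real.exp (-lam * a) * g a * survival g a) volume c d := by
  simpa only [mul_assoc] using (intervalIntegrable_mul_survival hg c d).continuousOn_mul
    (by fun_prop : Continuous fun a ↦ Real.exp (-lam * a)).continuousOn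

theorem setIntegral_Ioi_le_of_intervalIntegral_le {h : ℝ → ℝ} {a C : ℝ} (hh : ∀ x, 0 ≤ h x)
    (hh_int : ∀ b, IntervalIntegrable h volume a b) (hC : ∀ᶠ b in atTop, ∫ x in a..b, h x ≤ C) :
    ∫ x in Ioi a, h x ≤ C := by
  have hnorm : ∀ b, ∫ x in a..b, ‖h x‖ = ∫ x in a..b, h x := fun b ↦ by
    simp only [Real.norm_of_nonneg (hh _)]
  have hIoi : IntegrableOn h (Ioi a) :=
    integrableOn_Ioi_of_intervalIntegral_norm_bounded C a (fun b ↦ (hh_int b).1) tendsto_id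
      (by simpa only [hnorm] using hC)
  exact le_of_tendsto (intervalIntegral_tendsto_integral_Ioi a hIoi tendsto_id) hC

theorem intervalIntegral_exp_mul_mul_survival_le {g : ℝ → ℝ} {lam ε b : ℝ} (hlam : 0 ≤ lam)
    (hg : LocallyIntegrable g volume) (hg0 : ∀ s, 0 ≤ g s) (hε : 0 ≤ ε) (hεb : ε ≤ b) :
    ∫ a in (0:ℝ)..b, Real.exp (-lam * a) * g a * survival g a
      ≤ 1 - (1 - Real.exp (-lam * ε)) * survival g ε := by
  have hdens_int := intervalIntegrable_mul_survival hg
  have hweighted_int := intervalIntegrable_exp_mul_mul_survival lam hg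
  have hdens (a : ℝ) : 0 ≤ g a * survival g a := mul_nonneg (hg0 a) (survival_pos g a).le
  calc ∫ a in (0:ℝ)..b, Real.exp (-lam * a) * g a * survival g a
      = (∫ a in (0:ℝ)..ε, Real.exp (-lam * a) * g a * survival g a)
        + ∫ a in ε..b, Real.exp (-lam * a) * g a * survival g a :=
        (intervalIntegral.integral_add_adjacent_intervals (hweighted_int 0 ε)
          (hweighted_int ε b)).symm
    _ ≤ (∫ a in (0:ℝ)..ε, g a * survival g a)
        + ∫ a in ε..b, Real.exp (-lam * ε) * (g a * survival g a) := by
      gcongr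
      · refine intervalIntegral.integral_mono_on hε (hweighted_int 0 ε) (hdens_int 0 ε)
          fun a ha ↦ ?_
        rw [mul_assoc]
        exact mul_le_of_le_one_left (hdens a)
          (Real.exp_le_one_iff.2 (by nlinarith [ha.1]))
      · refine intervalIntegral.integral_mono_on hεb (hweighted_int ε b)
          ((hdens_int ε b).const_mul _) fun a ha ↦ ?_
        rw [mul_assoc]
        exact mul_le_mul_of_nonneg_right (Real.exp_le_exp.2 (by nlinarith [ha.1])) (hdens a)
    _ = 1 - survival g ε + Real.exp (-lam * ε) * (survival g ε - survival g b) := by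
      rw [intervalIntegral.integral_const_mul, integral_mul_survival hg,
        integral_mul_survival hg, survival_zero]
    _ ≤ 1 - (1 - Real.exp (-lam * ε)) * survival g ε := by
      nlinarith [Real.exp_pos (-lam * ε), survival_pos g b]

theorem setIntegral_Ioi_exp_mul_mul_survival_le {g : ℝ → ℝ} {lam ε : ℝ} (hlam : 0 ≤ lam)
    (hg : LocallyIntegrable g volume) (hg0 : ∀ s, 0 ≤ g s) (hε : 0 ≤ ε) :
    ∫ a in Ioi (0:ℝ), Real.exp (-lam * a) * g a * survival g a
      ≤ 1 - (1 - Real.exp (-lam * ε)) * survival g ε := by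
  exact setIntegral_Ioi_le_of_intervalIntegral_le
    (fun a ↦ mul_nonneg (mul_nonneg (Real.exp_pos _).le (hg0 a)) (survival_pos g a).le)
    (intervalIntegrable_exp_mul_mul_survival lam hg 0)
    ((eventually_ge_atTop ε).mono fun b hb ↦
      intervalIntegral_exp_mul_mul_survival_le hlam hg hg0 hε hb)

theorem memory_contraction_bound_general
    (lam : ℝ) (hlam : 0 < lam)
    (f : ℝ → ℝ → ℝ → ℝ) (Mf : ℝ)
    (hfmeas : Measurable fun p : ℝ × ℝ × ℝ => f p.1 p.2.1 p.2.2)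
    (hfpos : ∀ a m x, 0 ≤ f a m x ∧ f a m x ≤ Mf)
    (ε : ℝ) (hε : 0 < ε)
    (m x : ℝ) :
    (∫ a in Set.Ioi (0:ℝ),
      Real.exp (-lam * a) * f a (Real.exp (-lam * a) * m) x *
        Real.exp (-(∫ s in (0:ℝ)..a, f s (Real.exp (-lam * s) * m) x)))
      ≤ 1 - (1 - Real.exp (-lam * ε)) * Real.exp (-Mf * ε)
    ∧ 1 - (1 - Real.exp (-lam * ε)) * Real.exp (-Mf * ε) < 1 := by
  let g : ℝ → ℝ := fun s ↦ f s (Real.exp (-lam * s) * m) x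
  have hg0 (s : ℝ) : 0 ≤ g s := (hfpos _ _ _).1
  have hgM (s : ℝ) : g s ≤ Mf := (hfpos _ _ _).2
  have hgmeas : Measurable g :=
    hfmeas.comp (by fun_prop : Measurable fun s : ℝ ↦ (s, Real.exp (-lam * s) * m, x))
  have hg : LocallyIntegrable g volume :=
    (locallyIntegrable_const Mf).mono hgmeas.aestronglyMeasurable (ae_of_all _ fun s ↦ by
        rw [Real.norm_of_nonneg (hg0 s), Real.norm_of_nonneg ((hg0 s).trans (hgM s))]
        exact hgM s)
  have hdiscount : 0 < 1 - Real.exp (-lam * ε) :=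
    sub_pos.2 (Real.exp_lt_one_iff.2 (by nlinarith))
  refine ⟨?_, sub_lt_self 1 (mul_pos hdiscount (Real.exp_pos _))⟩
  calc _ ≤ 1 - (1 - Real.exp (-lam * ε)) * survival g ε :=
        setIntegral_Ioi_exp_mul_mul_survival_le hlam.le hg hg0 hε.le
    _ ≤ _ := by
        gcongr
        exact exp_neg_mul_le_survival hg hgM hε.le

/-- Average contraction of the memory variable at each jump:
∫₀^∞ e^{-λa} f(a, e^{-λa}m, x) exp(−∫₀^a f(s, e^{-λs}m, x) ds) da ≤ θ < 1,
with θ = 1 − (1−e^{-λε}) e^{−‖f‖_∞ ε}. -/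
theorem memory_contraction_bound
    (lam : ℝ) (hlam : 0 < lam)
    (f : ℝ → ℝ → ℝ → ℝ) (Mf σ Δ : ℝ) (hσ : 0 < σ) (hΔ : 0 ≤ Δ) (hMf : 0 ≤ Mf)
    (hfmeas : Measurable fun p : ℝ × ℝ × ℝ => f p.1 p.2.1 p.2.2)
    (hfpos : ∀ a m x, 0 ≤ f a m x ∧ f a m x ≤ Mf)
    (hflow : ∀ a m x, Δ ≤ a → 0 < m → σ ≤ f a m x)
    (ε : ℝ) (hε : 0 < ε)
    (m x : ℝ) (hm : 0 < m) :
    (∫ a in Set.Ioi (0:ℝ),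
      Real.exp (-lam * a) * f a (Real.exp (-lam * a) * m) x *
        Real.exp (-(∫ s in (0:ℝ)..a, f s (Real.exp (-lam * s) * m) x)))
      ≤ 1 - (1 - Real.exp (-lam * ε)) * Real.exp (-Mf * ε)
    ∧ 1 - (1 - Real.exp (-lam * ε)) * Real.exp (-Mf * ε) < 1 :=
  memory_contraction_bound_general lam hlam f Mf hfmeas hfpos ε hε m x
end

section
/- Let λ>0, β ∈ (0, σ/λ) where σ := inf f > 0, let f:ℝ₊×ℝ₊*×ℝ→ℝ₊ be measurable with σ ≤ f ≤ ‖f‖_∞. For ũ ∈ L¹₊(ℝ₊*), x̃ ∈ ℝ, it holds that ∫₀^∞ ∫₀^∞ m^{-β} f(a,m,x̃) ũ(e^{λa}m) exp(λa − ∫₀^a f(s, e^{λ(a−s)}m, x̃) ds) da dm ≤ (‖f‖_∞/λ) · (σ/λ − β)^{-1} · ∫₀^∞ ũ(y) y^{-β} dy. -/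
/-!
Bound `f ≤ Mf` in front and `∫₀^a f ≥ σ a` in the exponent, so the integrand is at most
`Mf e^{(λ-σ)a} ũ(e^{λa} m) m^{-β}`. After Tonelli, the substitution `y = e^{λa} m` turns the
`m`-integral into `e^{λa(β-1)} ∫ ũ(y) y^{-β} dy`, and what is left is
`Mf ∫₀^∞ e^{-(σ-λβ)a} da = Mf / (σ - λβ)`. Comparing through `‖·‖ₑ` and lower Lebesgue
integrals (`enorm_integral_le_lintegral_enorm`) needs no measurability or integrability of the
integrand itself.
-/

open MeasureTheory Set Real
open scoped ENNReal

theorem lintegral_comp_mul_left_Ioi (g : ℝ → ℝ≥0∞) (a : ℝ) {c : ℝ} (hc : 0 < c) :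
    ∫⁻ x in Ioi a, g (c * x) = ENNReal.ofReal c⁻¹ * ∫⁻ x in Ioi (c * a), g x := by
  have he : MeasurableEmbedding (c * ·) := (Homeomorph.mulLeft₀ c hc.ne').measurableEmbedding
  calc ∫⁻ x in Ioi a, g (c * x)
      = ∫⁻ x, g x ∂(volume.restrict (Ioi a)).map (c * ·) := (he.lintegral_map _).symm
    _ = ∫⁻ x, g x ∂(volume.map (c * ·)).restrict (Ioi (c * a)) := by
        rw [he.restrict_map, preimage_const_mul_Ioi₀ _ hc, mul_div_cancel_left₀ _ hc.ne']
    _ = ENNReal.ofReal c⁻¹ * ∫⁻ x in Ioi (c * a), g x := by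
        rw [Real.map_volume_mul_left hc.ne', Measure.restrict_smul, lintegral_smul_measure,
          abs_of_pos (inv_pos.mpr hc), smul_eq_mul]

theorem lintegral_comp_mul_left_mul_rpow_Ioi (g : ℝ → ℝ) (β : ℝ) {c : ℝ} (hc : 0 < c) :
    ∫⁻ m in Ioi 0, ENNReal.ofReal (g (c * m) * m ^ (-β))
      = ENNReal.ofReal (c ^ (β - 1)) * ∫⁻ y in Ioi 0, ENNReal.ofReal (g y * y ^ (-β)) := by
  have homog : ∀ m ∈ Ioi (0 : ℝ), ENNReal.ofReal (g (c * m) * m ^ (-β))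
      = ENNReal.ofReal (c ^ β) * ENNReal.ofReal (g (c * m) * (c * m) ^ (-β)) := by
    intro m hm
    rw [← ENNReal.ofReal_mul (by positivity), mul_rpow hc.le (le_of_lt hm), rpow_neg hc.le]
    field_simp
  rw [setLIntegral_congr_fun measurableSet_Ioi homog,
    lintegral_const_mul' _ _ ENNReal.ofReal_ne_top,
    lintegral_comp_mul_left_Ioi (fun y => ENNReal.ofReal (g y * y ^ (-β))) 0 hc, mul_zero,
    ← mul_assoc, ← ENNReal.ofReal_mul (by positivity), rpow_sub_one hc.ne', div_eq_mul_inv]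

theorem lintegral_exp_neg_mul_Ioi_zero {b : ℝ} (hb : 0 < b) :
    ∫⁻ a in Ioi 0, ENNReal.ofReal (exp (-b * a)) = ENNReal.ofReal b⁻¹ := by
  rw [← ofReal_integral_eq_lintegral_ofReal (integrableOn_exp_mul_Ioi (neg_neg_of_pos hb) 0)
    (.of_forall fun a => (exp_pos _).le), integral_exp_mul_Ioi (neg_neg_of_pos hb)]
  simp

theorem mul_sub_le_intervalIntegral {g : ℝ → ℝ} {c a b : ℝ} (hab : a ≤ b)
    (hg : IntervalIntegrable g volume a b) (h : ∀ s, c ≤ g s) :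
    c * (b - a) ≤ ∫ s in a..b, g s := by
  simpa [mul_comm] using
    intervalIntegral.integral_mono_on hab intervalIntegrable_const hg fun s _ => h s

theorem intervalIntegrable_of_norm_le {g : ℝ → ℝ} (hg : Measurable g) {C : ℝ}
    (h : ∀ s, ‖g s‖ ≤ C) (a b : ℝ) : IntervalIntegrable g volume a b :=
  intervalIntegrable_iff.2
    (IntegrableOn.of_bound measure_Ioc_lt_top hg.aestronglyMeasurable C (.of_forall h))

theorem lintegral_exp_mul_comp_exp_mul_mul_rpow {u : ℝ → ℝ} (hu : Measurable u) {lam σ β : ℝ}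
    (hβ : lam * β < σ) :
    ∫⁻ m in Ioi 0, ∫⁻ a in Ioi 0,
        ENNReal.ofReal (exp ((lam - σ) * a) * (u (exp (lam * a) * m) * m ^ (-β)))
      = ENNReal.ofReal (σ - lam * β)⁻¹ * ∫⁻ y in Ioi 0, ENNReal.ofReal (u y * y ^ (-β)) := by
  rw [lintegral_lintegral_swap (by fun_prop : Measurable fun p : ℝ × ℝ => ENNReal.ofReal
    (exp ((lam - σ) * p.2) * (u (exp (lam * p.2) * p.1) * p.1 ^ (-β)))).aemeasurable]
  calc ∫⁻ a in Ioi 0, ∫⁻ m in Ioi 0,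
        ENNReal.ofReal (exp ((lam - σ) * a) * (u (exp (lam * a) * m) * m ^ (-β)))
      = ∫⁻ a in Ioi 0, ENNReal.ofReal (exp (-(σ - lam * β) * a)) *
          ∫⁻ y in Ioi 0, ENNReal.ofReal (u y * y ^ (-β)) := by
        refine lintegral_congr fun a => ?_
        simp_rw [ENNReal.ofReal_mul (exp_pos _).le]
        rw [lintegral_const_mul' _ _ ENNReal.ofReal_ne_top,
          lintegral_comp_mul_left_mul_rpow_Ioi u β (exp_pos _), ← mul_assoc,
          ← ENNReal.ofReal_mul (exp_pos _).le, ← exp_mul, ← exp_add]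
        ring_nf
    _ = ENNReal.ofReal (σ - lam * β)⁻¹ * ∫⁻ y in Ioi 0, ENNReal.ofReal (u y * y ^ (-β)) := by
        rw [lintegral_mul_const _ (by fun_prop), lintegral_exp_neg_mul_Ioi_zero (sub_pos.2 hβ)]

theorem enorm_boundary_integrand_le {lam σ Mf β x m a : ℝ} {f : ℝ → ℝ → ℝ → ℝ}
    (hfmeas : Measurable fun p : ℝ × ℝ × ℝ => f p.1 p.2.1 p.2.2)
    (hfbd : ∀ a m x, σ ≤ f a m x ∧ f a m x ≤ Mf) (hσ : 0 ≤ σ)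
    {u : ℝ → ℝ} (hupos : ∀ y, 0 ≤ u y) (hm : 0 < m) (ha : 0 ≤ a) :
    ‖m ^ (-β) * f a m x * u (exp (lam * a) * m) *
        exp (lam * a - ∫ s in (0:ℝ)..a, f s (exp (lam * (a - s)) * m) x)‖ₑ
      ≤ ENNReal.ofReal Mf *
          ENNReal.ofReal (exp ((lam - σ) * a) * (u (exp (lam * a) * m) * m ^ (-β))) := by
  have hf_nonneg : 0 ≤ f a m x := hσ.trans (hfbd a m x).1
  have hMf : 0 ≤ Mf := hf_nonneg.trans (hfbd a m x).2
  have hu := hupos (exp (lam * a) * m)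
  have hcumulative_rate : σ * a ≤ ∫ s in (0:ℝ)..a, f s (exp (lam * (a - s)) * m) x := by
    have hmeas : Measurable fun s => f s (exp (lam * (a - s)) * m) x :=
      hfmeas.comp (f := fun s => (s, exp (lam * (a - s)) * m, x)) (by fun_prop)
    have hbound : ∀ s, ‖f s (exp (lam * (a - s)) * m) x‖ ≤ Mf := fun s => by
      obtain ⟨hlow, hup⟩ := hfbd s (exp (lam * (a - s)) * m) x
      rw [Real.norm_of_nonneg (hσ.trans hlow)]
      exact hup
    simpa using mul_sub_le_intervalIntegral ha (intervalIntegrable_of_norm_le hmeas hbound 0 a)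
      (fun s => (hfbd s _ x).1)
  rw [Real.enorm_eq_ofReal (by positivity), ← ENNReal.ofReal_mul hMf]
  refine ENNReal.ofReal_le_ofReal ?_
  calc m ^ (-β) * f a m x * u (exp (lam * a) * m) *
        exp (lam * a - ∫ s in (0:ℝ)..a, f s (exp (lam * (a - s)) * m) x)
      ≤ m ^ (-β) * Mf * u (exp (lam * a) * m) * exp (lam * a - σ * a) := by
        gcongr
        exact (hfbd a m x).2
    _ = Mf * (exp ((lam - σ) * a) * (u (exp (lam * a) * m) * m ^ (-β))) := by ring_nf

theorem singular_moment_estimate_general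
    (lam β σ Mf : ℝ) (hlam : 0 < lam) (hσ : 0 < σ) (hβ : β < σ / lam)
    (f : ℝ → ℝ → ℝ → ℝ)
    (hfmeas : Measurable fun p : ℝ × ℝ × ℝ => f p.1 p.2.1 p.2.2)
    (hfbd : ∀ a m x, σ ≤ f a m x ∧ f a m x ≤ Mf)
    (u : ℝ → ℝ) (humeas : Measurable u) (hupos : ∀ y, 0 ≤ u y)
    (huβ : IntegrableOn (fun y => u y * y ^ (-β)) (Set.Ioi (0:ℝ)))
    (x : ℝ) :
    (∫ m in Set.Ioi (0:ℝ), ∫ a in Set.Ioi (0:ℝ),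
        m ^ (-β) * f a m x * u (Real.exp (lam * a) * m) *
          Real.exp (lam * a - ∫ s in (0:ℝ)..a, f s (Real.exp (lam * (a - s)) * m) x))
      ≤ (Mf / lam) * (σ / lam - β)⁻¹ * ∫ y in Set.Ioi (0:ℝ), u y * y ^ (-β) := by
  have hMf : 0 ≤ Mf := hσ.le.trans ((hfbd 0 0 0).1.trans (hfbd 0 0 0).2)
  have hlamβ : lam * β < σ := by rwa [lt_div_iff₀ hlam, mul_comm] at hβ
  have hmoment_nonneg : ∀ y ∈ Ioi (0:ℝ), 0 ≤ u y * y ^ (-β) := fun y hy =>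
    mul_nonneg (hupos y) (rpow_nonneg (le_of_lt hy) _)
  have hmoment : ∫⁻ y in Ioi 0, ENNReal.ofReal (u y * y ^ (-β))
      = ENNReal.ofReal (∫ y in Ioi 0, u y * y ^ (-β)) :=
    (ofReal_integral_eq_lintegral_ofReal huβ
      ((ae_restrict_iff' measurableSet_Ioi).2 (.of_forall hmoment_nonneg))).symm
  have hRHS : 0 ≤ ∫ y in Ioi 0, u y * y ^ (-β) :=
    setIntegral_nonneg measurableSet_Ioi hmoment_nonneg
  have hconst : Mf / lam * (σ / lam - β)⁻¹ = Mf * (σ - lam * β)⁻¹ := by field_simp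
  rw [hconst, ← ENNReal.ofReal_le_ofReal_iff (by have := sub_pos.2 hlamβ; positivity)]
  calc _ ≤ ‖_‖ₑ := Real.ofReal_le_enorm _
    _ ≤ _ := (enorm_integral_le_lintegral_enorm _).trans
        (lintegral_mono fun m => enorm_integral_le_lintegral_enorm _)
    _ ≤ ∫⁻ m in Ioi 0, ∫⁻ a in Ioi 0, ENNReal.ofReal Mf *
          ENNReal.ofReal (exp ((lam - σ) * a) * (u (exp (lam * a) * m) * m ^ (-β))) :=
        setLIntegral_mono' measurableSet_Ioi fun m hm => setLIntegral_mono' measurableSet_Ioi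
          fun a ha => enorm_boundary_integrand_le hfmeas hfbd hσ.le hupos hm (le_of_lt ha)
    _ = _ := by
        simp_rw [lintegral_const_mul' _ _ ENNReal.ofReal_ne_top]
        rw [lintegral_exp_mul_comp_exp_mul_mul_rpow humeas hlamβ, hmoment,
          ← ENNReal.ofReal_mul (inv_nonneg.2 (sub_pos.2 hlamβ).le), ← ENNReal.ofReal_mul hMf,
          mul_assoc]

/-- Singular-moment estimate for the stationary boundary operator:
∫∫ m^{-β} f ũ(e^{λa}m) exp(λa − ∫₀^a f) da dm
  ≤ (‖f‖_∞/λ)(σ/λ − β)⁻¹ ∫ ũ(y) y^{-β} dy. -/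
theorem singular_moment_estimate
    (lam β σ Mf : ℝ) (hlam : 0 < lam) (hσ : 0 < σ) (hβ0 : 0 < β) (hβ : β < σ / lam)
    (f : ℝ → ℝ → ℝ → ℝ)
    (hfmeas : Measurable fun p : ℝ × ℝ × ℝ => f p.1 p.2.1 p.2.2)
    (hfbd : ∀ a m x, σ ≤ f a m x ∧ f a m x ≤ Mf)
    (u : ℝ → ℝ) (humeas : Measurable u) (hupos : ∀ y, 0 ≤ u y)
    (huint : IntegrableOn u (Set.Ioi (0:ℝ)))
    (huβ : IntegrableOn (fun y => u y * y ^ (-β)) (Set.Ioi (0:ℝ)))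
    (x : ℝ) :
    (∫ m in Set.Ioi (0:ℝ), ∫ a in Set.Ioi (0:ℝ),
        m ^ (-β) * f a m x * u (Real.exp (lam * a) * m) *
          Real.exp (lam * a - ∫ s in (0:ℝ)..a, f s (Real.exp (lam * (a - s)) * m) x))
      ≤ (Mf / lam) * (σ / lam - β)⁻¹ * ∫ y in Set.Ioi (0:ℝ), u y * y ^ (-β) :=
  singular_moment_estimate_general lam β σ Mf hlam hσ hβ f hfmeas hfbd u humeas hupos huβ x
end
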